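/- Let t be a real number with 2.8 ≤ t ≤ 5.78. Then F(0.8194, t) ≥ 0, where F(λ,t) = λ·(−1 + (t−3π/2)²/2 − (t−3π/2)⁴/24) + (−1 + (λt−3π/2)²/2 − (λt−3π/2)⁴/24) + λ(1−λ²)·(1 + 1/6560)·(t − t³/39366 + 1 − (t−3π/2)²/2). Moreover, the same function satisfies F(0.5, t) ≥ 0 for 2.8 ≤ t ≤ 5. -/

import Mathlib

open Real

noncomputable def F (l t : ℝ) : ℝ :=
  l * (-1 + (t - 3 * π / 2) ^ 2 / 2 - (t - 3 * π / 2) ^ 4 / 24) +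
    (-1 + (l * t - 3 * π / 2) ^ 2 / 2 - (l * t - 3 * π / 2) ^ 4 / 24) +
    l * (1 - l ^ 2) * (1 + 1 / 6560) *
      (t - t ^ 3 / 39366 + 1 - (t - 3 * π / 2) ^ 2 / 2)

/-! For fixed `l`, `F l t` is a polynomial in `t` and `π`. Replacing `π` by a variable `p` confined
to `[3.141592, 3.141593]`, nonnegativity on a box follows from a Positivstellensatz certificate
built from products of the interval constraints `(t - a) * (b - t) ≥ 0` and
`(p - 3.141592) * (3.141593 - p) ≥ 0` together with squares centred near the minimum in `t`. -/

lemma F_0_8194_nonneg {t : ℝ} (ht₀ : 2.8 ≤ t) (ht₁ : t ≤ 5.78) : 0 ≤ F 0.8194 t := by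
  have hπ₀ := pi_gt_d6
  have hπ₁ := pi_lt_d6
  unfold F
  generalize π = p at hπ₀ hπ₁ ⊢
  have ht : 0 ≤ (t - 2.8) * (5.78 - t) := mul_nonneg (by linarith) (by linarith)
  have hp : 0 ≤ (p - 3.141592) * (3.141593 - p) := mul_nonneg (by linarith) (by linarith)
  nlinarith [mul_nonneg ht ht, mul_nonneg ht hp, mul_nonneg hp hp,
    mul_nonneg ht (sq_nonneg (t - 5.0458)), mul_nonneg ht (sq_nonneg (t - 4)),
    sq_nonneg (t - 5.0458), sq_nonneg (t * t - 25.46)]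

lemma F_half_nonneg {t : ℝ} (ht₀ : 2.8 ≤ t) (ht₁ : t ≤ 5) : 0 ≤ F 0.5 t := by
  have hπ₀ := pi_gt_d6
  have hπ₁ := pi_lt_d6
  unfold F
  generalize π = p at hπ₀ hπ₁ ⊢
  have ht : 0 ≤ (t - 2.8) * (5 - t) := mul_nonneg (by linarith) (by linarith)
  have hp : 0 ≤ (p - 3.141592) * (3.141593 - p) := mul_nonneg (by linarith) (by linarith)
  nlinarith [mul_nonneg ht ht, mul_nonneg ht hp, mul_nonneg hp hp,
    mul_nonneg ht (sq_nonneg (t - 4)), sq_nonneg (t - 4), sq_nonneg (t * t - 16)]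

theorem stmt_19 (t : ℝ) (ht0 : 2.8 ≤ t) (ht1 : t ≤ 5.78) :
    F 0.8194 t ≥ 0 ∧ (t ≤ 5 → F 0.5 t ≥ 0) :=
  ⟨F_0_8194_nonneg ht0 ht1, F_half_nonneg ht0⟩
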